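/- Let b = Γ↷^b(X,μ) be a measure preserving action of a countable group Γ. Let B_1 = { ι_{η_{α(n)}}×b : n ≥ 1 } where α(n) = (1/n,…,1/n) ∈ [0,1]^n, and let B_2 = { ι_{η_α}×b : n ≥ 1, α ∈ [0,1]^n with Σ_{i<n} α_i = 1 }. Then ι×b, B_1, and B_2 are pairwise weakly equivalent (as sets of actions). -/

import Mathlib

open scoped NNReal ENNReal

/-- A measure preserving action of a group `Γ` on a standard probability space. -/
structure MPAction (Γ : Type) [Group Γ] where
  X : Type
  [mX : MeasurableSpace X]
  [sb : StandardBorelSpace X]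
  μ : MeasureTheory.Measure X
  [prob : MeasureTheory.IsProbabilityMeasure μ]
  act : Γ → X → X
  one_act : ∀ x, act 1 x = x
  mul_act : ∀ γ δ x, act (γ * δ) x = act γ (act δ x)
  pres : ∀ γ : Γ, MeasureTheory.MeasurePreserving (act γ) μ μ

attribute [instance] MPAction.mX MPAction.sb MPAction.prob

open MeasureTheory Topology Filter

variable {Γ : Type} [Group Γ]

/-- A finite Borel partition of a space. -/
def IsPartition {X : Type} [MeasurableSpace X] {k : ℕ} (A : Fin k → Set X) : Prop :=
  (∀ i, MeasurableSet (A i)) ∧ (∀ i j, i ≠ j → Disjoint (A i) (A j)) ∧ (⋃ i, A i) = Set.univ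

/-- Weak containment of a measure preserving action in an action on a (possibly
nonstandard) measure space, expressed at the level of the underlying data. -/
def WCgen {X Y : Type} [MeasurableSpace X] [MeasurableSpace Y]
    (actA : Γ → X → X) (μ : Measure X) (actB : Γ → Y → Y) (ν : Measure Y) : Prop :=
  ∀ (k : ℕ) (A : Fin k → Set X), IsPartition A →
    ∀ (F : Finset Γ) (ε : ℝ), 0 < ε →
      ∃ B : Fin k → Set Y, IsPartition B ∧
        ∀ γ ∈ F, ∀ i j : Fin k,
          |(μ (actA γ '' A i ∩ A j)).toReal - (ν (actB γ '' B i ∩ B j)).toReal| < ε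

/-- Weak containment `a ≺ b` of measure preserving actions. -/
def MPAction.WC (a b : MPAction Γ) : Prop := WCgen a.act a.μ b.act b.μ

/-- Weak equivalence `a ∼ b` of measure preserving actions. -/
def MPAction.WE (a b : MPAction Γ) : Prop := a.WC b ∧ b.WC a

/-- The diagonal product of two measure preserving actions. -/
noncomputable def MPAction.prod (a b : MPAction Γ) : MPAction Γ where
  X := a.X × b.X
  μ := a.μ.prod b.μ
  act γ p := (a.act γ p.1, b.act γ p.2)
  one_act p := by cases p with | mk x y => simp [a.one_act, b.one_act]
  mul_act γ δ p := by cases p with | mk x y => simp [a.mul_act, b.mul_act]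
  pres γ := (a.pres γ).prod (b.pres γ)

/-- The trivial (identity) action of `Γ` on a standard probability space `(Z, η)`. -/
def trivialAction (Γ : Type) [Group Γ] (Z : Type) [MeasurableSpace Z] [StandardBorelSpace Z]
    (η : Measure Z) [IsProbabilityMeasure η] : MPAction Γ where
  X := Z
  μ := η
  act _ z := z
  one_act _ := rfl
  mul_act _ _ _ := rfl
  pres _ := MeasurePreserving.id η

/-- Ergodicity: every invariant Borel set is null or conull. -/
def MPAction.IsErgodic (a : MPAction Γ) : Prop :=
  ∀ A : Set a.X, MeasurableSet A → (∀ γ : Γ, a.act γ ⁻¹' A = A) → a.μ A = 0 ∨ a.μ A = 1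

/-- Freeness: for every nonidentity group element, the set of fixed points is null. -/
def MPAction.IsFree (a : MPAction Γ) : Prop :=
  ∀ γ : Γ, γ ≠ 1 → a.μ {x | a.act γ x = x} = 0

/-- Strong ergodicity: every asymptotically invariant sequence of Borel sets is trivial. -/
def MPAction.IsStronglyErgodic (b : MPAction Γ) : Prop :=
  ∀ B : ℕ → Set b.X, (∀ n, MeasurableSet (B n)) →
    (∀ γ : Γ, Tendsto (fun n => (b.μ (symmDiff (b.act γ '' B n) (B n))).toReal) atTop (nhds 0)) →
    Tendsto (fun n => (b.μ (B n)).toReal * (1 - (b.μ (B n)).toReal)) atTop (nhds 0)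

/-- Stable weak containment: `a ≺ ι × b` where `ι` is the trivial action on a standard
non-atomic probability space. -/
def MPAction.SWC (a b : MPAction Γ) : Prop :=
  ∀ (Z : Type) [MeasurableSpace Z] [StandardBorelSpace Z] (η : Measure Z)
    [IsProbabilityMeasure η] [NullSingletonClass η],
    a.WC ((trivialAction Γ Z η).prod b)

/-- Stable weak equivalence. -/
def MPAction.SWE (a b : MPAction Γ) : Prop := a.SWC b ∧ b.SWC a

/-- Amenability: existence of a left-invariant finitely additive probability measure on
all subsets of the group. -/
def IsAmenable (Γ : Type) [Group Γ] : Prop :=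
  ∃ m : Set Γ → ℝ, (∀ A, 0 ≤ m A) ∧ m Set.univ = 1 ∧
    (∀ A B : Set Γ, Disjoint A B → m (A ∪ B) = m A + m B) ∧
    (∀ (γ : Γ) (A : Set Γ), m ((γ * ·) '' A) = m A)
open MeasureTheory Topology Filter

/-- The shift action of `Γ` on `K ^ Γ`. -/
def shiftMap (Γ : Type) [Group Γ] (K : Type) (γ : Γ) : (Γ → K) → (Γ → K) :=
  fun f δ => f (γ⁻¹ * δ)

/-- The itinerary map `Φ^{φ,a} : X → K^Γ` associated to an observable `φ : X → K`. -/
def itinMap {Γ : Type} [Group Γ] (a : MPAction Γ) (K : Type) (φ : a.X → K) : a.X → (Γ → K) :=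
  fun x γ => φ (a.act γ⁻¹ x)

/-- `E(a, K)`: the set of shift-invariant measures on `K^Γ` arising as pushforwards of the
measure of `a` under itinerary maps; equivalently, the shift-invariant factors of `a`. -/
def actE {Γ : Type} [Group Γ] (a : MPAction Γ) (K : Type) [MeasurableSpace K] :
    Set (ProbabilityMeasure (Γ → K)) :=
  {ν | ∃ φ : a.X → K, Measurable φ ∧
    (ν : Measure (Γ → K)) = Measure.map (itinMap a K φ) a.μ}

/-- The convex hull (set of finite convex combinations) of a set of probability measures. -/
def convexCombos {Ω : Type} [MeasurableSpace Ω] (E : Set (ProbabilityMeasure Ω)) :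
    Set (ProbabilityMeasure Ω) :=
  {ν | ∃ (n : ℕ) (w : Fin n → NNReal) (μs : Fin n → ProbabilityMeasure Ω),
      (∑ i, w i) = 1 ∧ (∀ i, μs i ∈ E) ∧
      (ν : Measure Ω) = ∑ i, (w i : ENNReal) • (μs i : Measure Ω)}

/-- Weak containment for sets of measure preserving actions. -/
def SetWC {Γ : Type} [Group Γ] (𝒜 ℬ : Set (MPAction Γ)) : Prop :=
  ∀ a ∈ 𝒜, ∀ (k : ℕ) (P : Fin k → Set a.X), IsPartition P →
    ∀ (F : Finset Γ) (ε : ℝ), 0 < ε →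
      ∃ b ∈ ℬ, ∃ Q : Fin k → Set b.X, IsPartition Q ∧
        ∀ γ ∈ F, ∀ i j : Fin k,
          |(a.μ (a.act γ '' P i ∩ P j)).toReal - (b.μ (b.act γ '' Q i ∩ Q j)).toReal| < ε

/-- Weak equivalence for sets of measure preserving actions. -/
def SetWE {Γ : Type} [Group Γ] (𝒜 ℬ : Set (MPAction Γ)) : Prop := SetWC 𝒜 ℬ ∧ SetWC ℬ 𝒜

open MeasureTheory Topology Filter

/-- The discrete probability measure on `Fin n` with weights `α`. -/
noncomputable def discreteMeasure {n : ℕ} (α : Fin n → NNReal) : Measure (Fin n) :=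
  ∑ i, (α i : ENNReal) • Measure.dirac i

lemma discreteMeasure_isProbability {n : ℕ} (α : Fin n → NNReal) (hα : ∑ i, α i = 1) :
    IsProbabilityMeasure (discreteMeasure α) := by
  constructor
  simp only [discreteMeasure, Measure.finset_sum_apply, Measure.smul_apply, smul_eq_mul,
    Measure.dirac_apply_of_mem (Set.mem_univ _), mul_one]
  rw [← ENNReal.coe_finset_sum, hα, ENNReal.coe_one]

/-- The convex combination `Σ_{i<n} α_i b = ι_{η_α} × b` of `n` copies of `b`. -/
noncomputable def convexSumAction {Γ : Type} [Group Γ] (b : MPAction Γ) {n : ℕ}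
    (α : Fin n → NNReal) (hα : ∑ i, α i = 1) : MPAction Γ :=
  haveI := discreteMeasure_isProbability α hα
  (trivialAction Γ (Fin n) (discreteMeasure α)).prod b

lemma uniformSum (n : ℕ) (hn : 0 < n) : (∑ _i : Fin n, ((n : NNReal))⁻¹) = 1 := by
  simp only [Finset.sum_const, Finset.card_univ, Fintype.card_fin, nsmul_eq_mul]
  rw [mul_inv_cancel₀]
  exact_mod_cast hn.ne'

/-- The set of actions `ι_{η_{α(n)}} × b` for uniform weights `α(n) = (1/n, …, 1/n)`. -/
noncomputable def uniformConvexSums {Γ : Type} [Group Γ] (b : MPAction Γ) : Set (MPAction Γ) :=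
  {d | ∃ (n : ℕ) (hn : 0 < n),
    d = convexSumAction b (fun _ : Fin n => ((n : NNReal))⁻¹) (uniformSum n hn)}

/-- The set of actions `ι_{η_α} × b` over all finite convex weights `α`. -/
noncomputable def allConvexSums {Γ : Type} [Group Γ] (b : MPAction Γ) : Set (MPAction Γ) :=
  {d | ∃ (n : ℕ) (_ : 1 ≤ n) (α : Fin n → NNReal) (hα : ∑ i, α i = 1),
    d = convexSumAction b α hα}

/-!
The containments `ι × b ≺ B₂ ≺ B₁ ⊆ B₂ ≺ ι × b` give all three equivalences. Each one is
witnessed by pulling partitions back along a map `(z, x) ↦ (φ z, x)`, which commutes with the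
actions; so it suffices to compare `κ × μ` with `φ_* κ' × μ` on finitely many Borel sets.

* `B₂ ≺ ι × b`: by Sierpiński's theorem `(Z, η)` splits into pieces of measures `α_i`, and
  `φ` sending the `i`-th piece to `i` gives `φ_* η = η_α` exactly.
* `B₂ ≺ B₁`: approximate `α` by `c / N` with `∑ c_i = N` and map `N` atoms of mass `1 / N` onto
  `n` atoms with fibres of sizes `c_i`; the error is at most `∑ |α_i - c_i / N| ≤ n / N`.
* `ι × b ≺ B₂`: the measure of `S ⊆ Z × X` is `∫ μ(S_z) dη(z)`. Cutting `Z` into finitely many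
  cells on which the finitely many functions `z ↦ μ(S_z)` oscillate by less than `ε`, and
  collapsing each cell to a point, changes these integrals by less than `ε`.
-/

open Set

lemma MPAction.image_act_eq_preimage_inv (a : MPAction Γ) (γ : Γ) (A : Set a.X) :
    a.act γ '' A = a.act γ⁻¹ ⁻¹' A := by
  ext x
  constructor
  · rintro ⟨y, hy, rfl⟩
    rwa [mem_preimage, ← a.mul_act, inv_mul_cancel, a.one_act]
  · intro hx
    exact ⟨a.act γ⁻¹ x, hx, by rw [← a.mul_act, mul_inv_cancel, a.one_act]⟩

lemma IsPartition.preimage {X Y : Type} [MeasurableSpace X] [MeasurableSpace Y] {k : ℕ}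
    {A : Fin k → Set Y} (h : IsPartition A) {T : X → Y} (hT : Measurable T) :
    IsPartition fun i => T ⁻¹' A i := by
  obtain ⟨hm, hd, hu⟩ := h
  refine ⟨fun i => hT (hm i), fun i j hij => (hd i j hij).preimage T, ?_⟩
  rw [← preimage_iUnion, hu, preimage_univ]

lemma SetWC.trans {𝒜 ℬ 𝒞 : Set (MPAction Γ)} (h₁ : SetWC 𝒜 ℬ) (h₂ : SetWC ℬ 𝒞) :
    SetWC 𝒜 𝒞 := by
  intro a ha k P hP F ε hε
  obtain ⟨b, hb, Q, hQ, hPQ⟩ := h₁ a ha k P hP F (ε / 2) (half_pos hε)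
  obtain ⟨c, hc, R, hR, hQR⟩ := h₂ b hb k Q hQ F (ε / 2) (half_pos hε)
  refine ⟨c, hc, R, hR, fun γ hγ i j => ?_⟩
  have := abs_sub_le (a.μ (a.act γ '' P i ∩ P j)).toReal (b.μ (b.act γ '' Q i ∩ Q j)).toReal
    (c.μ (c.act γ '' R i ∩ R j)).toReal
  linarith [hPQ γ hγ i j, hQR γ hγ i j]

lemma SetWC.of_subset {𝒜 ℬ : Set (MPAction Γ)} (h : 𝒜 ⊆ ℬ) : SetWC 𝒜 ℬ :=
  fun a ha _ P hP _ _ hε => ⟨a, h ha, P, hP, fun _ _ _ _ => by simpa using hε⟩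

/-- The statistics of a partition pulled back along an equivariant map are the measures of the
pulled-back sets `γ P_i ∩ P_j`. -/
theorem SetWC.of_forall_exists_equivariant {𝒜 ℬ : Set (MPAction Γ)}
    (h : ∀ a ∈ 𝒜, ∀ (ι : Type) [Fintype ι] (S : ι → Set a.X), (∀ p, MeasurableSet (S p)) →
      ∀ ε > 0, ∃ c ∈ ℬ, ∃ T : c.X → a.X, Measurable T ∧
        (∀ γ x, T (c.act γ x) = a.act γ (T x)) ∧
        ∀ p, |(a.μ (S p)).toReal - (c.μ (T ⁻¹' S p)).toReal| < ε) :
    SetWC 𝒜 ℬ := by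
  intro a ha k P hP F ε hε
  obtain ⟨c, hc, T, hT, hTeq, hS⟩ := h a ha (F × Fin k × Fin k)
    (fun p => a.act p.1 '' P p.2.1 ∩ P p.2.2)
    (fun p => by
      rw [a.image_act_eq_preimage_inv]
      exact ((a.pres _).measurable (hP.1 _)).inter (hP.1 _)) ε hε
  refine ⟨c, hc, fun i => T ⁻¹' P i, hP.preimage hT, fun γ hγ i j => ?_⟩
  have hpull : c.act γ '' (T ⁻¹' P i) ∩ T ⁻¹' P j = T ⁻¹' (a.act γ '' P i ∩ P j) := by
    ext x
    simp only [a.image_act_eq_preimage_inv, c.image_act_eq_preimage_inv, mem_inter_iff,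
      mem_preimage, hTeq]
  rw [hpull]
  exact hS (⟨γ, hγ⟩, i, j)

namespace MeasureTheory.Measure

lemma prod_preimage_prodMap_id {C₁ C₂ X : Type} [MeasurableSpace C₁] [MeasurableSpace C₂]
    [MeasurableSpace X] (κ : Measure C₁) [SFinite κ] (μ : Measure X) [SFinite μ] {φ : C₁ → C₂}
    (hφ : Measurable φ) {S : Set (C₂ × X)} (hS : MeasurableSet S) :
    κ.prod μ (Prod.map φ id ⁻¹' S) = (κ.map φ).prod μ S := by
  rw [← map_apply (hφ.prodMap measurable_id) hS, ← map_prod_map _ _ hφ measurable_id, map_id]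

lemma toReal_prod_apply_eq_integral {Z X : Type} [MeasurableSpace Z] [MeasurableSpace X]
    (κ : Measure Z) [SFinite κ] (μ : Measure X) [IsFiniteMeasure μ] {S : Set (Z × X)}
    (hS : MeasurableSet S) :
    (κ.prod μ S).toReal = ∫ z, (μ (Prod.mk z ⁻¹' S)).toReal ∂κ := by
  rw [prod_apply hS, integral_toReal (measurable_measure_prodMk_left hS).aemeasurable
    (ae_of_all _ fun _ => measure_lt_top _ _)]

end MeasureTheory.Measure

lemma discreteMeasure_apply {n : ℕ} (α : Fin n → NNReal) (s : Set (Fin n)) [DecidablePred (· ∈ s)] :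
    discreteMeasure α s = ∑ l with l ∈ s, (α l : ℝ≥0∞) := by
  simp [discreteMeasure, Measure.dirac_apply', Set.indicator, Finset.sum_ite]

lemma discreteMeasure_singleton {n : ℕ} (α : Fin n → NNReal) (l : Fin n) :
    discreteMeasure α {l} = α l := by
  simp [discreteMeasure, Measure.dirac_apply', Set.indicator]

lemma map_eq_discreteMeasure {Z : Type} [MeasurableSpace Z] (η : Measure Z) {n : ℕ}
    {ψ : Z → Fin n} (hψ : Measurable ψ) {α : Fin n → NNReal}
    (h : ∀ l, η (ψ ⁻¹' {l}) = α l) : η.map ψ = discreteMeasure α := by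
  refine Measure.ext_iff_singleton.2 fun l => ?_
  rw [Measure.map_apply hψ (measurableSet_singleton l), h, discreteMeasure_singleton]

lemma integral_discreteMeasure {n : ℕ} (α : Fin n → NNReal) (g : Fin n → ℝ) :
    ∫ l, g l ∂discreteMeasure α = ∑ l, (α l : ℝ) * g l := by
  simp [discreteMeasure, integral_finsetSum_measure, NNReal.smul_def]

lemma abs_toReal_discreteMeasure_prod_sub_le {n : ℕ} (α β : Fin n → NNReal) {X : Type}
    [MeasurableSpace X] (μ : Measure X) [IsProbabilityMeasure μ] {S : Set (Fin n × X)}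
    (hS : MeasurableSet S) :
    |((discreteMeasure α).prod μ S).toReal - ((discreteMeasure β).prod μ S).toReal| ≤
      ∑ l, |(α l : ℝ) - β l| := by
  simp only [Measure.toReal_prod_apply_eq_integral _ _ hS, integral_discreteMeasure,
    ← Finset.sum_sub_distrib, ← sub_mul]
  refine (Finset.abs_sum_le_sum_abs _ _).trans (Finset.sum_le_sum fun l _ => ?_)
  rw [abs_mul, abs_of_nonneg ENNReal.toReal_nonneg]
  exact mul_le_of_le_one_right (abs_nonneg _) measureReal_le_one

open Filter Topology in
lemma continuous_measureReal_Iic (ν : Measure ℝ) [IsFiniteMeasure ν] [NullSingletonClass ν] :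
    Continuous fun u => ν.real (Iic u) := by
  refine continuous_iff_continuousAt.2 fun x => tendsto_iff_norm_sub_tendsto_zero.2 ?_
  have hd : Tendsto (fun y => |y - x|) (𝓝 x) (𝓝 0) := by
    simpa using ((continuous_id.sub continuous_const).abs.tendsto x : Tendsto _ _ (𝓝 |x - x|))
  refine squeeze_zero (fun _ => norm_nonneg _) (fun y => ?_)
    ((ENNReal.tendsto_toReal ENNReal.zero_ne_top).comp ((tendsto_measure_Icc ν x).comp hd))
  -- the increment of the distribution function is the mass of an interval around `x`
  rw [Real.norm_eq_abs, Function.comp_apply, Function.comp_apply, ← measureReal_def]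
  have hle : ∀ {u v : ℝ}, u ≤ v → |u - x| ≤ |y - x| → |v - x| ≤ |y - x| →
      |ν.real (Iic v) - ν.real (Iic u)| ≤ ν.real (Icc (x - |y - x|) (x + |y - x|)) := by
    intro u v huv hu hv
    rw [abs_of_nonneg (sub_nonneg.2 (measureReal_mono (Iic_subset_Iic.2 huv))),
      ← measureReal_sdiff (Iic_subset_Iic.2 huv) measurableSet_Iic]
    refine measureReal_mono fun z hz => ?_
    simp only [Set.mem_sdiff, mem_Iic, not_le, mem_Icc] at hz ⊢
    constructor <;> linarith [le_abs_self (u - x), neg_abs_le (u - x), le_abs_self (v - x),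
      neg_abs_le (v - x)]
  rcases le_total x y with hxy | hyx
  · exact hle hxy (by simp) le_rfl
  · rw [abs_sub_comm]
    exact hle hyx le_rfl (by simp)

open Filter Topology in
/-- Sierpiński's theorem. Transport the measure to `ℝ` and apply the intermediate value theorem
to its distribution function. -/
lemma exists_measurableSet_measure_eq {Z : Type} [MeasurableSpace Z] [StandardBorelSpace Z]
    (ν : Measure Z) [IsFiniteMeasure ν] [NullSingletonClass ν] {r : ℝ≥0∞} (hr : r ≤ ν univ) :
    ∃ t, MeasurableSet t ∧ ν t = r := by
  rcases hr.eq_or_lt with rfl | hlt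
  · exact ⟨univ, MeasurableSet.univ, rfl⟩
  rcases eq_or_ne r 0 with rfl | hr0
  · exact ⟨∅, MeasurableSet.empty, measure_empty⟩
  have hf := measurableEmbedding_embeddingReal Z
  set ν' := ν.map (embeddingReal Z)
  have hν' : ∀ u, ν' (Iic u) = ν (embeddingReal Z ⁻¹' Iic u) := fun u =>
    hf.map_apply _ _
  have : NullSingletonClass ν' := ⟨fun x => by
    rw [hf.map_apply]
    exact Subsingleton.measure_zero (fun _ h₁ _ h₂ => hf.injective (h₁.trans h₂.symm)) ν⟩
  have hbot : Tendsto (fun u => ν' (Iic u)) atBot (𝓝 0) := by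
    have hempty : ⋂ u : ℝ, Iic u = ∅ :=
      eq_empty_of_forall_notMem fun x hx => by linarith [mem_Iic.1 (mem_iInter.1 hx (x - 1))]
    simpa [Function.comp_def, hempty] using tendsto_measure_iInter_atBot (μ := ν')
      (fun _ => measurableSet_Iic.nullMeasurableSet) (fun _ _ => Iic_subset_Iic.2)
      ⟨0, measure_ne_top _ _⟩
  have htop : Tendsto (fun u => ν' (Iic u)) atTop (𝓝 (ν univ)) := by
    simpa [ν', hf.map_apply] using tendsto_measure_Iic_atTop ν'
  obtain ⟨a, ha⟩ := (hbot.eventually_lt_const (pos_iff_ne_zero.2 hr0)).exists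
  obtain ⟨b, hb⟩ := (htop.eventually_const_lt hlt).exists
  have hrtop : r ≠ ∞ := (hlt.trans_le le_top).ne
  obtain ⟨u, hu⟩ := mem_range_of_exists_le_of_exists_ge (continuous_measureReal_Iic ν')
    ⟨a, (ENNReal.toReal_lt_toReal (measure_ne_top _ _) hrtop |>.2 ha).le⟩
    ⟨b, (ENNReal.toReal_lt_toReal hrtop (measure_ne_top _ _) |>.2 hb).le⟩
  refine ⟨embeddingReal Z ⁻¹' Iic u, hf.measurable measurableSet_Iic, ?_⟩
  rw [← hν', ← ENNReal.toReal_eq_toReal_iff' (measure_ne_top _ _) hrtop]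
  exact hu

lemma exists_measurable_measure_fiber_eq {Z : Type} [MeasurableSpace Z] [StandardBorelSpace Z]
    {n : ℕ} (ν : Measure Z) [IsFiniteMeasure ν] [NullSingletonClass ν]
    (β : Fin (n + 1) → ℝ≥0∞) (hβ : ∑ l, β l = ν univ) :
    ∃ ψ : Z → Fin (n + 1), Measurable ψ ∧ ∀ l, ν (ψ ⁻¹' {l}) = β l := by
  classical
  induction n generalizing ν with
  | zero =>
    refine ⟨fun _ => 0, measurable_const, fun l => ?_⟩
    simpa [Fin.fin_one_eq_zero l] using hβ.symm
  | succ n ih =>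
    rw [Fin.sum_univ_succ] at hβ
    obtain ⟨t, ht, hνt⟩ := exists_measurableSet_measure_eq ν (hβ ▸ le_self_add)
    obtain ⟨ψ, hψ, hψβ⟩ := ih (ν.restrict tᶜ) (fun l => β l.succ) (by
      rw [Measure.restrict_apply_univ, measure_compl ht (measure_ne_top _ _), ← hβ, hνt,
        ENNReal.add_sub_cancel_left (hνt ▸ measure_ne_top _ _)])
    refine ⟨fun z => if z ∈ t then 0 else (ψ z).succ,
      Measurable.ite ht measurable_const ((measurable_of_finite Fin.succ).comp hψ), fun l => ?_⟩
    induction l using Fin.cases with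
    | zero =>
      convert hνt using 2
      ext z
      by_cases hz : z ∈ t <;> simp [hz, Fin.succ_ne_zero]
    | succ l =>
      rw [← hψβ l, Measure.restrict_apply (hψ (measurableSet_singleton l)), inter_comm]
      congr 1
      ext z
      by_cases hz : z ∈ t <;> simp [hz, (Fin.succ_ne_zero _).symm]

lemma exists_map_eq_discreteMeasure {Z : Type} [MeasurableSpace Z] [StandardBorelSpace Z]
    (η : Measure Z) [IsProbabilityMeasure η] [NullSingletonClass η] {n : ℕ}
    (α : Fin (n + 1) → NNReal) (hα : ∑ l, α l = 1) :
    ∃ ψ : Z → Fin (n + 1), Measurable ψ ∧ η.map ψ = discreteMeasure α := by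
  obtain ⟨ψ, hψ, hψα⟩ := exists_measurable_measure_fiber_eq η (fun l => α l) (by
    rw [measure_univ, ← ENNReal.ofNNReal_finsetSum, hα, ENNReal.coe_one])
  exact ⟨ψ, hψ, map_eq_discreteMeasure η hψ hψα⟩

lemma setWC_allConvexSums_prod (b : MPAction Γ) (Z : Type) [MeasurableSpace Z]
    [StandardBorelSpace Z] (η : Measure Z) [IsProbabilityMeasure η] [NullSingletonClass η] :
    SetWC (allConvexSums b) {(trivialAction Γ Z η).prod b} := by
  refine SetWC.of_forall_exists_equivariant fun a ha ι _ S hS ε hε => ?_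
  obtain ⟨n, hn, α, hα, rfl⟩ := ha
  obtain ⟨m, rfl⟩ := Nat.exists_eq_add_of_le' hn
  obtain ⟨ψ, hψ, hψα⟩ := exists_map_eq_discreteMeasure η α hα
  refine ⟨_, rfl, Prod.map ψ id, hψ.prodMap measurable_id, fun _ _ => rfl, fun p => ?_⟩
  change |((discreteMeasure α).prod b.μ (S p)).toReal -
    (η.prod b.μ (Prod.map ψ id ⁻¹' S p)).toReal| < ε
  rwa [Measure.prod_preimage_prodMap_id _ _ hψ (hS p), hψα, sub_self, abs_zero]

/-- Take the differences of the floors of `N` times the partial sums of `α`. -/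
lemma exists_nat_approx_of_sum_eq_one {n : ℕ} (α : Fin n → NNReal) (hα : ∑ l, α l = 1) {N : ℕ}
    (hN : 0 < N) : ∃ c : Fin n → ℕ, ∑ l, c l = N ∧ ∀ l, |(α l : ℝ) - c l / N| ≤ 1 / N := by
  set a : ℕ → ℝ := fun i => if h : i < n then α ⟨i, h⟩ else 0
  set g : ℕ → ℕ := fun m => ⌊N * ∑ i ∈ Finset.range m, a i⌋₊
  have ha : ∀ i, 0 ≤ a i := fun i => by simp only [a]; split <;> positivity
  have hs : ∀ m, 0 ≤ (N : ℝ) * ∑ i ∈ Finset.range m, a i := fun m =>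
    mul_nonneg N.cast_nonneg (Finset.sum_nonneg fun i _ => ha i)
  have hg : Monotone g := fun u v huv => Nat.floor_mono (mul_le_mul_of_nonneg_left
    (Finset.sum_le_sum_of_subset_of_nonneg (Finset.range_subset_range.2 huv) fun i _ _ => ha i)
    N.cast_nonneg)
  have hgn : g n = N := by
    simp only [g, ← Fin.sum_univ_eq_sum_range a n, a, Fin.is_lt, dif_pos, Fin.eta,
      ← NNReal.coe_sum, hα, NNReal.coe_one, mul_one, Nat.floor_natCast]
  refine ⟨fun l => g (l + 1) - g l, ?_, fun l => ?_⟩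
  · rw [Fin.sum_univ_eq_sum_range (fun i => g (i + 1) - g i), Finset.sum_range_tsub hg, hgn]
    simp [g]
  · have hstep : ∑ i ∈ Finset.range (l + 1), a i = ∑ i ∈ Finset.range l, a i + α l := by
      simp [Finset.sum_range_succ, a]
    have hN' : (0 : ℝ) < N := Nat.cast_pos.2 hN
    have h₁ := Nat.floor_le (hs (l + 1))
    have h₂ := Nat.lt_floor_add_one ((N : ℝ) * ∑ i ∈ Finset.range (l + 1), a i)
    have h₃ := Nat.floor_le (hs l)
    have h₄ := Nat.lt_floor_add_one ((N : ℝ) * ∑ i ∈ Finset.range l, a i)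
    rw [hstep, mul_add] at h₁ h₂
    have key : |(N : ℝ) * α l - (g (l + 1) - g l : ℕ)| ≤ 1 := by
      rw [Nat.cast_sub (hg (Nat.le_succ l)), abs_le]
      simp only [g, hstep, mul_add]
      constructor <;> linarith
    rw [show (α l : ℝ) - (g (l + 1) - g l : ℕ) / N = ((N : ℝ) * α l - (g (l + 1) - g l : ℕ)) / N
      by field_simp, abs_div, abs_of_pos hN']
    exact div_le_div_of_nonneg_right key hN'.le

open Finset in
lemma exists_map_uniform_eq_discreteMeasure {n N : ℕ} (c : Fin n → ℕ) (hc : ∑ l, c l = N) :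
    ∃ ψ : Fin N → Fin n, (discreteMeasure fun _ : Fin N => (N : ℝ≥0)⁻¹).map ψ =
      discreteMeasure fun l => (c l : ℝ≥0) / N := by
  classical
  subst hc
  refine ⟨fun j => (finSigmaFinEquiv.symm j).1, map_eq_discreteMeasure _ (measurable_of_finite _)
    fun l => ?_⟩
  have hcard : #{j : Fin (∑ l, c l) | (finSigmaFinEquiv.symm j).1 = l} = c l := by
    rw [Finset.card_filter, ← Equiv.sum_comp finSigmaFinEquiv, Fintype.sum_sigma]
    simp
  simp only [discreteMeasure_apply, Set.mem_preimage, Set.mem_singleton_iff, sum_const,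
    nsmul_eq_mul, hcard, div_eq_mul_inv, ENNReal.coe_mul, ENNReal.coe_natCast]

lemma setWC_allConvexSums_uniformConvexSums (b : MPAction Γ) :
    SetWC (allConvexSums b) (uniformConvexSums b) := by
  refine SetWC.of_forall_exists_equivariant fun a ha ι _ S hS ε hε => ?_
  obtain ⟨n, -, α, hα, rfl⟩ := ha
  obtain ⟨N, hN⟩ := exists_nat_gt (n / ε)
  have hN0 : 0 < N := by exact_mod_cast (div_nonneg n.cast_nonneg hε.le).trans_lt hN
  obtain ⟨c, hcN, hc⟩ := exists_nat_approx_of_sum_eq_one α hα hN0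
  obtain ⟨ψ, hψ⟩ := exists_map_uniform_eq_discreteMeasure c hcN
  have hψm : Measurable ψ := measurable_of_finite ψ
  refine ⟨_, ⟨N, hN0, rfl⟩, Prod.map ψ id, hψm.prodMap measurable_id, fun _ _ => rfl,
    fun p => ?_⟩
  change |((discreteMeasure α).prod b.μ (S p)).toReal -
    ((discreteMeasure _).prod b.μ (Prod.map ψ id ⁻¹' S p)).toReal| < ε
  rw [Measure.prod_preimage_prodMap_id _ _ hψm (hS p), hψ]
  calc _ ≤ ∑ l, |(α l : ℝ) - ((c l : ℝ≥0) / N : ℝ≥0)| :=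
        abs_toReal_discreteMeasure_prod_sub_le _ _ _ (hS p)
    _ ≤ ∑ _l : Fin n, 1 / (N : ℝ) := Finset.sum_le_sum fun l _ => by simpa using hc l
    _ = n / N := by simp [div_eq_mul_inv]
    _ < ε := by rwa [div_lt_iff₀ (by positivity), mul_comm, ← div_lt_iff₀ hε]

/-- Group the points by the integer parts of the `g p z / δ` and send each point to a chosen
representative of its group. -/
lemma exists_measurable_quantization {Z : Type} [MeasurableSpace Z] [Nonempty Z] {ι : Type}
    [Fintype ι] {g : ι → Z → ℝ} (hg : ∀ p, Measurable (g p)) (hg0 : ∀ p z, 0 ≤ g p z)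
    (hg1 : ∀ p z, g p z ≤ 1) {δ : ℝ} (hδ : 0 < δ) :
    ∃ (m : ℕ) (q : Z → Fin m) (zc : Fin m → Z), Measurable q ∧
      ∀ p z, |g p z - g p (zc (q z))| < δ := by
  classical
  set K := ⌊δ⁻¹⌋₊
  have hK : ∀ p z, ⌊g p z / δ⌋₊ ≤ K := fun p z => Nat.floor_mono (by
    rw [div_eq_mul_inv]; exact mul_le_of_le_one_left (inv_nonneg.2 hδ.le) (hg1 p z))
  let clamp : ℕ → Fin (K + 1) := fun v => ⟨min v K, Nat.lt_succ_of_le (min_le_right _ _)⟩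
  let cell : Z → ι → Fin (K + 1) := fun z p => clamp ⌊g p z / δ⌋₊
  have hcell : Measurable cell := measurable_pi_iff.2 fun p =>
    (measurable_from_nat (f := clamp)).comp (Nat.measurable_floor.comp ((hg p).div_const δ))
  let e := Fintype.equivFin (ι → Fin (K + 1))
  let q := e ∘ cell
  refine ⟨_, q, Function.invFun q, (measurable_of_finite e).comp hcell, fun p z => ?_⟩
  have hq : cell (Function.invFun q (q z)) = cell z :=
    e.injective (Function.invFun_eq (f := q) ⟨z, rfl⟩)
  have hfloor : ⌊g p (Function.invFun q (q z)) / δ⌋₊ = ⌊g p z / δ⌋₊ := by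
    simpa [cell, clamp, min_eq_left (hK _ _)] using congrArg Fin.val (congrFun hq p)
  have h := Int.abs_sub_lt_one_of_floor_eq_floor (a := g p z / δ)
    (b := g p (Function.invFun q (q z)) / δ) (by
      rw [← Int.natCast_floor_eq_floor (div_nonneg (hg0 _ _) hδ.le),
        ← Int.natCast_floor_eq_floor (div_nonneg (hg0 _ _) hδ.le), hfloor])
  rwa [← sub_div, abs_div, abs_of_pos hδ, div_lt_one hδ] at h

lemma abs_toReal_prod_sub_prod_map_le {Z X : Type} [MeasurableSpace Z] [MeasurableSpace X]
    (η : Measure Z) [IsProbabilityMeasure η] (μ : Measure X) [IsFiniteMeasure μ] {φ : Z → Z}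
    (hφ : Measurable φ) {S : Set (Z × X)} (hS : MeasurableSet S) {δ : ℝ}
    (h : ∀ z, |(μ (Prod.mk z ⁻¹' S)).toReal - (μ (Prod.mk (φ z) ⁻¹' S)).toReal| ≤ δ) :
    |(η.prod μ S).toReal - ((η.map φ).prod μ S).toReal| ≤ δ := by
  have hg : Measurable fun z => (μ (Prod.mk z ⁻¹' S)).toReal :=
    (measurable_measure_prodMk_left hS).ennreal_toReal
  have hgi : ∀ ν : Measure Z, IsFiniteMeasure ν →
      Integrable (fun z => (μ (Prod.mk z ⁻¹' S)).toReal) ν := fun ν _ =>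
    .of_bound hg.aestronglyMeasurable (μ univ).toReal (ae_of_all _ fun z => by
      rw [Real.norm_eq_abs, abs_of_nonneg ENNReal.toReal_nonneg]
      exact ENNReal.toReal_mono (measure_ne_top _ _) (measure_mono (subset_univ _)))
  have hgφ : Integrable (fun z => (μ (Prod.mk (φ z) ⁻¹' S)).toReal) η :=
    (hgi _ inferInstance).comp_measurable hφ
  rw [Measure.toReal_prod_apply_eq_integral _ _ hS, Measure.toReal_prod_apply_eq_integral _ _ hS,
    integral_map hφ.aemeasurable hg.aestronglyMeasurable, ← integral_sub (hgi η inferInstance) hgφ]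
  simpa using norm_integral_le_of_norm_le_const (μ := η)
    (f := fun z => (μ (Prod.mk z ⁻¹' S)).toReal - (μ (Prod.mk (φ z) ⁻¹' S)).toReal) (ae_of_all _ h)

lemma setWC_prod_allConvexSums (b : MPAction Γ) (Z : Type) [MeasurableSpace Z]
    [StandardBorelSpace Z] (η : Measure Z) [IsProbabilityMeasure η] :
    SetWC {(trivialAction Γ Z η).prod b} (allConvexSums b) := by
  refine SetWC.of_forall_exists_equivariant fun a ha ι _ S hS ε hε => ?_
  subst ha
  -- restate with the product σ-algebra of `Z × b.X` rather than that of the action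
  change ι → Set (Z × b.X) at S
  change ∀ p, MeasurableSet (S p) at hS
  have : Nonempty Z := nonempty_of_isProbabilityMeasure η
  obtain ⟨m, q, zc, hq, hzc⟩ := exists_measurable_quantization
    (g := fun p (z : Z) => (b.μ (Prod.mk z ⁻¹' S p)).toReal)
    (fun p => (measurable_measure_prodMk_left (hS p)).ennreal_toReal)
    (fun _ _ => ENNReal.toReal_nonneg) (fun _ _ => measureReal_le_one) (half_pos hε)
  set α : Fin m → ℝ≥0 := fun l => (η (q ⁻¹' {l})).toNNReal
  have hqα : η.map q = discreteMeasure α := map_eq_discreteMeasure η hq fun l =>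
    (ENNReal.coe_toNNReal (measure_ne_top _ _)).symm
  have hα : ∑ l, α l = 1 := by
    have h : η.map q univ = discreteMeasure α univ := by rw [hqα]
    have : IsProbabilityMeasure (η.map q) := Measure.isProbabilityMeasure_map hq.aemeasurable
    simp only [measure_univ, discreteMeasure_apply, mem_univ, Finset.filter_true] at h
    exact_mod_cast h.symm
  have hzcm : Measurable zc := measurable_of_finite zc
  refine ⟨convexSumAction b α hα, ⟨m, (q (Classical.arbitrary Z)).pos, α, hα, rfl⟩,
    Prod.map zc id, hzcm.prodMap measurable_id, fun _ _ => rfl, fun p => ?_⟩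
  change |(η.prod b.μ (S p)).toReal -
    ((discreteMeasure α).prod b.μ (Prod.map zc id ⁻¹' S p)).toReal| < ε
  rw [Measure.prod_preimage_prodMap_id _ _ hzcm (hS p), ← hqα, Measure.map_map hzcm hq]
  exact (abs_toReal_prod_sub_prod_map_le η b.μ (hzcm.comp hq) (hS p)
    fun z => (hzc p z).le).trans_lt (half_lt_self hε)

lemma uniformConvexSums_subset_allConvexSums (b : MPAction Γ) :
    uniformConvexSums b ⊆ allConvexSums b := by
  rintro _ ⟨n, hn, rfl⟩
  exact ⟨n, hn, _, _, rfl⟩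

theorem stmt10_general (Γ : Type) [Group Γ] (b : MPAction Γ)
    (Z : Type) [MeasurableSpace Z] [StandardBorelSpace Z] (η : Measure Z)
    [IsProbabilityMeasure η] [NullSingletonClass η] :
    SetWE {(trivialAction Γ Z η).prod b} (uniformConvexSums b) ∧
    SetWE {(trivialAction Γ Z η).prod b} (allConvexSums b) ∧
    SetWE (uniformConvexSums b) (allConvexSums b) := by
  have prod_all := setWC_prod_allConvexSums b Z η
  have all_unif := setWC_allConvexSums_uniformConvexSums b
  have all_prod := setWC_allConvexSums_prod b Z η
  have unif_all := SetWC.of_subset (uniformConvexSums_subset_allConvexSums b)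
  exact ⟨⟨prod_all.trans all_unif, unif_all.trans all_prod⟩, ⟨prod_all, all_prod⟩,
    ⟨unif_all, all_unif⟩⟩

/-- **Lemma (Tucker-Drob, Lemma 3.2).** Let `b` be a measure preserving action of a
countable group `Γ`.  Let `B₁ = {ι_{η_{α(n)}} × b : n ≥ 1}` with uniform weights
`α(n) = (1/n, …, 1/n)` and `B₂ = {ι_{η_α} × b : n ≥ 1, α ∈ [0,1]^n, Σ α_i = 1}`.
Then `ι × b`, `B₁` and `B₂` are pairwise weakly equivalent as sets of actions. -/
theorem stmt10 (Γ : Type) [Group Γ] [Countable Γ] (b : MPAction Γ)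
    (Z : Type) [MeasurableSpace Z] [StandardBorelSpace Z] (η : Measure Z)
    [IsProbabilityMeasure η] [NullSingletonClass η] :
    SetWE {(trivialAction Γ Z η).prod b} (uniformConvexSums b) ∧
    SetWE {(trivialAction Γ Z η).prod b} (allConvexSums b) ∧
    SetWE (uniformConvexSums b) (allConvexSums b) :=
  stmt10_general Γ b Z η
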